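/- For every natural number n, the number of strings of length n over the three-letter alphabet {E, L, R} in which no two consecutive letters both belong to {L, R} (i.e., the cardinality of the set of functions f : Fin n → Fin 3 such that there is no index i with both f(i) ≠ 0 and f(i+1) ≠ 0) equals the Jacobsthal number J(n+2). -/

import Mathlib

/-! Over an alphabet of `k` letters with a distinguished letter `E`, an admissible string of
length `n + 2` is either `E` followed by an admissible string of length `n + 1`, or one of the
other `k - 1` letters followed by `E` and an admissible string of length `n`. Hence the counts
satisfy `c (n + 2) = c (n + 1) + (k - 1) * c n` with `c 0 = 1`, `c 1 = k`; for `k = 3` this is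
the Jacobsthal recurrence shifted by two. -/

def J : ℕ → ℕ
  | 0 => 0
  | 1 => 1
  | n + 2 => J (n + 1) + 2 * J n

section

variable {α : Type*} [Zero α]

def Admissible {n : ℕ} (f : Fin n → α) : Prop :=
  ∀ i : Fin n, ∀ h : (i : ℕ) + 1 < n, ¬(f i ≠ 0 ∧ f ⟨(i : ℕ) + 1, h⟩ ≠ 0)

theorem admissible_succ_iff {n : ℕ} {f : Fin (n + 1) → α} :
    Admissible f ↔ ∀ i : Fin n, f i.castSucc ≠ 0 → f i.succ = 0 := by
  constructor
  · intro hf i hi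
    by_contra h
    exact hf i.castSucc (by simp) ⟨hi, h⟩
  · rintro hf i hi ⟨h₁, h₂⟩
    exact h₂ (hf ⟨i, by omega⟩ h₁)

theorem admissible_of_le_one {n : ℕ} (hn : n ≤ 1) (f : Fin n → α) : Admissible f :=
  fun _ _ => by omega

theorem admissible_cons_iff {n : ℕ} {a : α} {g : Fin (n + 1) → α} :
    Admissible (Fin.cons a g : Fin (n + 2) → α) ↔ (a ≠ 0 → g 0 = 0) ∧ Admissible g := by
  simp only [admissible_succ_iff, Fin.forall_fin_succ (n := n)]
  simp

theorem admissible_cons_zero_iff {n : ℕ} {g : Fin n → α} :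
    Admissible (Fin.cons 0 g : Fin (n + 1) → α) ↔ Admissible g := by
  cases n with
  | zero => simp only [admissible_of_le_one le_rfl, admissible_of_le_one zero_le_one]
  | succ n => simp [admissible_cons_iff]

def admissibleEquivAdmissibleCons {a : α} (ha : a ≠ 0) (n : ℕ) :
    {h : Fin n → α // Admissible h} ≃
      {g : Fin (n + 1) → α // Admissible (Fin.cons a g : Fin (n + 2) → α)} where
  toFun h :=
    ⟨Fin.cons 0 h, admissible_cons_iff.2 ⟨fun _ => rfl, admissible_cons_zero_iff.2 h.2⟩⟩
  invFun g := ⟨Fin.tail g.1, by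
    obtain ⟨hg₀, hg⟩ := admissible_cons_iff.1 g.2
    rwa [← Fin.cons_self_tail g.1, hg₀ ha, admissible_cons_zero_iff] at hg⟩
  left_inv h := by simp
  right_inv g := by
    ext1
    conv_rhs => rw [← Fin.cons_self_tail g.1, (admissible_cons_iff.1 g.2).1 ha]

def consSubtypeEquivSigma {n : ℕ} (p : (Fin (n + 1) → α) → Prop) :
    {f : Fin (n + 1) → α // p f} ≃ Σ a, {g : Fin n → α // p (Fin.cons a g)} :=
  ((Fin.consEquiv fun _ => α).symm.subtypeEquiv fun f => by simp).trans
    (Equiv.subtypeProdEquivSigmaSubtype fun a g => p (Fin.cons a g))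

theorem card_admissible_add_two [Fintype α] [DecidableEq α] (n : ℕ) :
    Nat.card {f : Fin (n + 2) → α // Admissible f} =
      Nat.card {f : Fin (n + 1) → α // Admissible f} +
        (Fintype.card α - 1) * Nat.card {f : Fin n → α // Admissible f} := by
  have hsplit := Nat.card_congr (consSubtypeEquivSigma (n := n + 1) (Admissible (α := α)))
  rw [hsplit, Nat.card_sigma, ← Finset.add_sum_erase _ _ (Finset.mem_univ 0)]
  congr 1
  · exact Nat.card_congr (Equiv.subtypeEquivRight fun _ => admissible_cons_zero_iff)
  · rw [Finset.sum_congr rfl fun a ha =>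
      (Nat.card_congr (admissibleEquivAdmissibleCons (Finset.ne_of_mem_erase ha) n)).symm]
    simp [Finset.card_erase_of_mem]

theorem card_admissible_zero : Nat.card {f : Fin 0 → α // Admissible f} = 1 := by
  rw [Nat.card_congr (Equiv.subtypeUnivEquiv (admissible_of_le_one zero_le_one))]
  exact Nat.card_unique

theorem card_admissible_one [Fintype α] :
    Nat.card {f : Fin 1 → α // Admissible f} = Fintype.card α := by
  rw [Nat.card_congr (Equiv.subtypeUnivEquiv (admissible_of_le_one le_rfl))]
  simp

end

theorem card_admissible_fin_three :
    ∀ n : ℕ, Nat.card {f : Fin n → Fin 3 // Admissible f} = J (n + 2)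
  | 0 => card_admissible_zero
  | 1 => card_admissible_one
  | n + 2 => by
    rw [card_admissible_add_two, card_admissible_fin_three (n + 1), card_admissible_fin_three n]
    rfl

theorem count_admissible_eq_jacobsthal (n : ℕ) :
    Fintype.card {f : Fin n → Fin 3 //
      ∀ i : Fin n, ∀ h : (i : ℕ) + 1 < n,
        ¬(f i ≠ 0 ∧ f ⟨(i : ℕ) + 1, h⟩ ≠ 0)} = J (n + 2) := by
  rw [← Nat.card_eq_fintype_card]
  exact card_admissible_fin_three n
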